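/- arXiv:1011.3262 — 2 statements merged into one kernel-verified Lean document; each statement's English description precedes it below -/
import Mathlib

section
/- Let x_1, ..., x_n be real numbers such that no two distinct nonempty subsets of {x_1,...,x_n} have the same arithmetic mean. Extend cyclically by x_{k+n} = x_k. Then there is a unique index k* with 1 ≤ k* ≤ n such that the partial sums of the cyclically shifted sequence (x_{k*}, x_{k*+1}, ..., x_{k*+n-1}) lie below the chord joining the start and end points, i.e., for all 1 ≤ m ≤ n-1, (1/m)·∑_{i=0}^{m-1} x_{k*+i} ≤ (1/n)·∑_{i=1}^{n} x_i. -/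
/-!
Put `f i = x (i mod n) - A`, where `A` is the mean of the `x i`, and `Q j = ∑ i < j, f i`. Since
`f` sums to zero over a period, `Q` is `n`-periodic, and the window inequality of length `m` at
`k` says `Q (k + m) ≤ Q k`; so the admissible starting indices are exactly the maximizers of `Q`
on `[0, n)`, and one exists. A tie `Q a = Q b` with `a < b < n` would make the block
`{a, …, b - 1}` a proper subset with mean `A`, the mean of the whole set; hence the maximizer is
unique.
-/

open Finset

section PartialSums

variable {α : Type*} [AddCommGroup α] {f : ℕ → α} {n : ℕ}

theorem sum_range_add_period (hf : Function.Periodic f n) (hsum : ∑ i ∈ range n, f i = 0)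
    (j : ℕ) : ∑ i ∈ range (j + n), f i = ∑ i ∈ range j, f i := by
  induction j with
  | zero => simpa using hsum
  | succ j ih => rw [Nat.add_right_comm, sum_range_succ, ih, hf, sum_range_succ]

variable [LinearOrder α] [IsOrderedAddMonoid α]

theorem forall_sum_range_shift_nonpos_iff_isMaxOn (hf : Function.Periodic f n)
    (hsum : ∑ i ∈ range n, f i = 0) {k : ℕ} (hk : k < n) :
    (∀ m, 1 ≤ m → m ≤ n - 1 → ∑ i ∈ range m, f (k + i) ≤ 0) ↔
      IsMaxOn (fun j ↦ ∑ i ∈ range j, f i) (Set.Iio n) k := by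
  have shift (m : ℕ) : ∑ i ∈ range (k + m), f i = ∑ i ∈ range k, f i + ∑ i ∈ range m, f (k + i) :=
    sum_range_add f k m
  rw [isMaxOn_iff]
  constructor
  · intro h j hj
    simp only [Set.mem_Iio] at hj
    rcases lt_trichotomy k j with hkj | rfl | hjk
    · obtain ⟨m, rfl⟩ := Nat.exists_eq_add_of_le hkj.le
      rw [shift]
      exact add_le_of_nonpos_right (h _ (by omega) (by omega))
    · exact le_rfl
    · have hj : j + n = k + (n - k + j) := by omega
      rw [← sum_range_add_period hf hsum j, hj, shift]
      exact add_le_of_nonpos_right (h _ (by omega) (by omega))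
  · intro h m hm1 hm2
    have hle : ∑ i ∈ range (k + m), f i ≤ ∑ i ∈ range k, f i := by
      rcases lt_or_ge (k + m) n with hlt | hge
      · exact h _ hlt
      · have hkm : k + m = (k + m - n) + n := by omega
        rw [hkm, sum_range_add_period hf hsum]
        exact h _ (by simp only [Set.mem_Iio]; omega)
    rwa [shift, add_le_iff_nonpos_right] at hle

end PartialSums

theorem sum_div_card_eq_of_sum_sub_eq_zero {ι K : Type*} [Field K] [CharZero K] {S : Finset ι}
    {x : ι → K} {c : K} (hS : S.Nonempty) (h : ∑ i ∈ S, (x i - c) = 0) :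
    (∑ i ∈ S, x i) / S.card = c := by
  rw [sum_sub_distrib, sum_const, nsmul_eq_mul, sub_eq_zero] at h
  rw [h, mul_div_cancel_left₀ _ (by simpa using hS.ne_empty)]

theorem sum_range_div_le_iff_sum_sub_nonpos {K : Type*} [Field K] [LinearOrder K]
    [IsStrictOrderedRing K] {g : ℕ → K} {c : K} {m : ℕ} (hm : 0 < m) :
    (∑ i ∈ range m, g i) / m ≤ c ↔ ∑ i ∈ range m, (g i - c) ≤ 0 := by
  rw [div_le_iff₀ (by exact_mod_cast hm), sum_sub_distrib, sum_const, card_range, nsmul_eq_mul,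
    sub_nonpos, mul_comm]

theorem injOn_sum_range_sub_of_sum_sub_ne_zero {n : ℕ} (hn : 0 < n) {x : Fin n → ℝ} {c : ℝ}
    (hx : ∀ S : Finset (Fin n), S.Nonempty → S ≠ univ → ∑ i ∈ S, (x i - c) ≠ 0) :
    Set.InjOn (fun j ↦ ∑ i ∈ range j, (x ⟨i % n, Nat.mod_lt _ hn⟩ - c)) (Set.Iio n) := by
  suffices h : ∀ a b : ℕ, a < b → b < n →
      ∑ i ∈ range a, (x ⟨i % n, Nat.mod_lt _ hn⟩ - c) ≠
        ∑ i ∈ range b, (x ⟨i % n, Nat.mod_lt _ hn⟩ - c) by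
    intro a ha b hb hab
    simp only [Set.mem_Iio] at ha hb
    by_contra hne
    rcases Nat.lt_or_gt_of_ne hne with hlt | hlt
    · exact h a b hlt hb hab
    · exact h b a hlt ha hab.symm
  intro a b hab hb heq
  let a' : Fin n := ⟨a, hab.trans hb⟩
  let b' : Fin n := ⟨b, hb⟩
  refine hx (Ico a' b') (nonempty_Ico.2 hab) (fun hu ↦ ?_) ?_
  · have hb' : b' ∈ Ico a' b' := hu ▸ mem_univ b'
    simp at hb'
  · have hIco : ∑ i ∈ Ico a' b', (x i - c) =
        ∑ i ∈ Ico (a' : ℕ) b', (x ⟨i % n, Nat.mod_lt _ hn⟩ - c) := by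
      rw [← Fin.map_valEmbedding_Ico, sum_map]
      exact sum_congr rfl fun i _ ↦ by simp [Nat.mod_eq_of_lt i.isLt]
    rw [hIco, sum_Ico_eq_sub _ hab.le, heq, sub_self]

theorem stmt_0 (n : ℕ) (hn : 0 < n) (x : Fin n → ℝ)
    (hA : ∀ S T : Finset (Fin n), S.Nonempty → T.Nonempty → S ≠ T →
      (∑ i ∈ S, x i) / S.card ≠ (∑ i ∈ T, x i) / T.card) :
    ∃! k : Fin n, ∀ m : ℕ, 1 ≤ m → m ≤ n - 1 →
      (∑ i ∈ Finset.range m, x (⟨(k.val + i) % n, Nat.mod_lt _ hn⟩)) / m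
        ≤ (∑ i, x i) / n := by
  set A := (∑ i, x i) / n
  set f : ℕ → ℝ := fun i ↦ x ⟨i % n, Nat.mod_lt _ hn⟩ - A
  have hper : Function.Periodic f n := fun i ↦ by simp [f]
  have hsum : ∑ i ∈ range n, f i = 0 := by
    rw [← Fin.sum_univ_eq_sum_range f]
    simp only [f, Fin.is_lt, Nat.mod_eq_of_lt, Fin.eta, sum_sub_distrib, sum_const, card_univ,
      Fintype.card_fin, nsmul_eq_mul]
    rw [mul_div_cancel₀ _ (by exact_mod_cast hn.ne'), sub_self]
  have hmax_iff (k : Fin n) : (∀ m : ℕ, 1 ≤ m → m ≤ n - 1 →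
      (∑ i ∈ range m, x ⟨(k.val + i) % n, Nat.mod_lt _ hn⟩) / m ≤ A) ↔
        IsMaxOn (fun j ↦ ∑ i ∈ range j, f i) (Set.Iio n) k := by
    rw [← forall_sum_range_shift_nonpos_iff_isMaxOn hper hsum k.isLt]
    exact forall_congr' fun m ↦ imp_congr_right fun hm ↦ imp_congr_right fun _ ↦
      sum_range_div_le_iff_sum_sub_nonpos hm
  have hinj : Set.InjOn (fun j ↦ ∑ i ∈ range j, f i) (Set.Iio n) :=
    injOn_sum_range_sub_of_sum_sub_ne_zero hn fun S hS hSu h ↦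
      hA S univ hS ⟨⟨0, hn⟩, mem_univ _⟩ hSu <| by
        rw [sum_div_card_eq_of_sum_sub_eq_zero hS h, card_univ, Fintype.card_fin]
  obtain ⟨k, hk, hmax⟩ := Set.exists_max_image _ (fun j ↦ ∑ i ∈ range j, f i) (Set.finite_Iio n)
    ⟨0, hn⟩
  refine ⟨⟨k, hk⟩, (hmax_iff _).2 (isMaxOn_iff.2 hmax), fun k' hk' ↦ Fin.ext ?_⟩
  exact hinj k'.isLt hk <|
    le_antisymm (hmax _ k'.isLt) (isMaxOn_iff.1 ((hmax_iff k').1 hk') _ hk)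
end

section
/- Let X_1,...,X_n be exchangeable random variables such that almost surely no two distinct nonempty subsets have the same arithmetic mean, and let S_j = X_1+...+X_j. Let (N_{n,1},...,N_{n,F_n}) be the composition of n given by the lengths of the faces of the concave majorant in order. Then for every composition (n_1,...,n_k) of n: P(F_n = k, N_{n,i} = n_i for 1 ≤ i ≤ k) = P(S_{n_1}^{(1)}/n_1 > S_{n_2}^{(2)}/n_2 > ··· > S_{n_k}^{(k)}/n_k) · ∏_{i=1}^k (1/n_i), where S_{n_i}^{(i)} = S_{n_1+···+n_i} − S_{n_1+···+n_{i−1}}. -/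
/-!
For generic increments, the walk meets its concave majorant exactly at the partial sums of
`(n_1, …, n_k)` iff the block slopes `S^{(i)}/n_i` strictly decrease and, inside every block,
the walk stays strictly below the chord joining the block's endpoints. Rotating the increments
cyclically inside one block preserves genericity, all block slopes and all other blocks, and by
the cycle lemma exactly one of the `n_i` rotations puts the block strictly below its chord. By
exchangeability the rotations are equally likely, so imposing the chord condition on block `i`
divides the probability by `n_i`; doing this block by block turns `P(slopes decrease)` into
`n_1 ⋯ n_k · P(face lengths are n_1, …, n_k)`.
-/

open Finset MeasureTheory

theorem existsUnique_forall_lt_of_periodic {α : Type*} [LinearOrder α] {T : ℕ → α} {m : ℕ}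
    (hm : 0 < m) (hT : Function.Periodic T m) (hinj : Set.InjOn T (Set.Iio m)) :
    ∃! s, s < m ∧ ∀ q, 0 < q → q < m → T (s + q) < T s := by
  have hT' : ∀ u, m ≤ u → T u = T (u - m) := fun u hu => by
    rw [← hT (u - m), Nat.sub_add_cancel hu]
  have hstrict : ∀ t < m, (∀ q, 0 < q → q < m → T (t + q) < T t) →
      ∀ u < m, u ≠ t → T u < T t := by
    intro t ht htmax u hu hut
    rcases lt_or_gt_of_ne hut with hlt | hgt
    · have := htmax (u + m - t) (by omega) (by omega)
      rwa [show t + (u + m - t) = u + m by omega, hT] at this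
    · have := htmax (u - t) (by omega) (by omega)
      rwa [show t + (u - t) = u by omega] at this
  obtain ⟨s, hs, hmax⟩ := exists_max_image (range m) T (nonempty_range_iff.2 hm.ne')
  rw [mem_range] at hs
  have hmax' : ∀ u < m, u ≠ s → T u < T s := fun u hu hus =>
    (hmax u (mem_range.2 hu)).lt_of_ne fun h => hus (hinj hu hs h)
  refine ⟨s, ⟨hs, fun q hq hqm => ?_⟩, fun t ⟨ht, htmax⟩ => ?_⟩
  · rcases lt_or_ge (s + q) m with h | h
    · exact hmax' _ h (by omega)
    · rw [hT' _ h]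
      exact hmax' _ (by omega) (by omega)
  · by_contra hts
    exact (hmax' t ht hts).not_gt (hstrict t ht htmax s hs (Ne.symm hts))

lemma sum_Icc_eq_sum_range {M : Type*} [AddCommMonoid M] (g : ℕ → M) (c q : ℕ) :
    ∑ l ∈ Icc (c + 1) (c + q), g l = ∑ t ∈ range q, g (c + 1 + t) := by
  rw [range_eq_Ico, ← Ico_add_one_right_eq_Icc]
  simp_rw [add_comm (c + 1)]
  rw [sum_Ico_add' g 0 q (c + 1), zero_add, add_comm c q, add_assoc]

lemma measure_eq_card_mul_of_eq_biUnion_preimage {α ι : Type*} [MeasurableSpace α]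
    {ν : Measure α} {A B : Set α} (s : Finset ι) (g : ι → α → α)
    (hg : ∀ k ∈ s, MeasurePreserving (g k) ν ν) (hB : MeasurableSet B)
    (hdisj : (s : Set ι).PairwiseDisjoint fun k => g k ⁻¹' B) (hA : A = ⋃ k ∈ s, g k ⁻¹' B) :
    ν A = #s * ν B := by
  rw [hA, measure_biUnion_finset hdisj fun k hk => (hg k hk).measurable hB,
    sum_congr rfl fun k hk => (hg k hk).measure_preimage hB.nullMeasurableSet, sum_const,
    nsmul_eq_mul]

namespace ConcaveMajorant

section Chords

noncomputable def partialSum (f : ℕ → ℝ) (j : ℕ) : ℝ := ∑ i ∈ Icc 1 j, f i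

noncomputable def chordSlope (f : ℕ → ℝ) (a b : ℕ) : ℝ :=
  (partialSum f b - partialSum f a) / ((b : ℝ) - a)

variable {f : ℕ → ℝ} {a b c : ℕ}

lemma partialSum_sub_partialSum (h : a ≤ b) :
    partialSum f b - partialSum f a = ∑ i ∈ Icc (a + 1) b, f i := by
  have hIcc : ∀ j, Icc 1 j = Ioc 0 j := Icc_add_one_left_eq_Ioc 0
  rw [partialSum, partialSum, hIcc, hIcc, Icc_add_one_left_eq_Ioc,
    ← sum_Ioc_consecutive f (Nat.zero_le a) h, add_sub_cancel_left]

lemma chordSlope_eq_sum_div_card (h : a < b) :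
    chordSlope f a b = (∑ i ∈ Icc (a + 1) b, f i) / #(Icc (a + 1) b) := by
  rw [chordSlope, partialSum_sub_partialSum h.le, Nat.card_Icc, Nat.add_sub_add_right,
    Nat.cast_sub h.le]

lemma chordSlope_mul_add (hab : a < b) (hbc : b < c) :
    ((c : ℝ) - a) * chordSlope f a c
      = ((b : ℝ) - a) * chordSlope f a b + ((c : ℝ) - b) * chordSlope f b c := by
  have hab' : (a : ℝ) < b := by exact_mod_cast hab
  have hbc' : (b : ℝ) < c := by exact_mod_cast hbc
  simp only [chordSlope]
  field_simp [sub_ne_zero.2 hab'.ne', sub_ne_zero.2 hbc'.ne',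
    sub_ne_zero.2 (hab'.trans hbc').ne']
  ring

/- `chordSlope f a c` is a weighted average of `chordSlope f a b` and `chordSlope f b c`, so one
strict comparison among the three slopes determines all the others. -/
lemma chordSlope_left_lt_whole_iff (hab : a < b) (hbc : b < c) :
    chordSlope f a b < chordSlope f a c ↔ chordSlope f a b < chordSlope f b c := by
  constructor <;> intro <;> nlinarith [chordSlope_mul_add (f := f) hab hbc,
    (Nat.cast_lt (α := ℝ)).2 hab, (Nat.cast_lt (α := ℝ)).2 hbc]

lemma chordSlope_whole_lt_right_iff (hab : a < b) (hbc : b < c) :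
    chordSlope f a c < chordSlope f b c ↔ chordSlope f a b < chordSlope f b c := by
  constructor <;> intro <;> nlinarith [chordSlope_mul_add (f := f) hab hbc,
    (Nat.cast_lt (α := ℝ)).2 hab, (Nat.cast_lt (α := ℝ)).2 hbc]

lemma chordSlope_whole_lt_left_iff (hab : a < b) (hbc : b < c) :
    chordSlope f a c < chordSlope f a b ↔ chordSlope f b c < chordSlope f a b := by
  constructor <;> intro <;> nlinarith [chordSlope_mul_add (f := f) hab hbc,
    (Nat.cast_lt (α := ℝ)).2 hab, (Nat.cast_lt (α := ℝ)).2 hbc]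

lemma chordSlope_right_lt_whole_iff (hab : a < b) (hbc : b < c) :
    chordSlope f b c < chordSlope f a c ↔ chordSlope f b c < chordSlope f a b := by
  constructor <;> intro <;> nlinarith [chordSlope_mul_add (f := f) hab hbc,
    (Nat.cast_lt (α := ℝ)).2 hab, (Nat.cast_lt (α := ℝ)).2 hbc]

lemma chordSlope_congr {g : ℕ → ℝ} (hab : a ≤ b) (h : ∀ i ∈ Icc (a + 1) b, f i = g i) :
    chordSlope f a b = chordSlope g a b := by
  rw [chordSlope, chordSlope, partialSum_sub_partialSum hab, partialSum_sub_partialSum hab,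
    sum_congr rfl h]

end Chords

def GenericMeans (n : ℕ) (f : ℕ → ℝ) : Prop :=
  ∀ S T : Finset ℕ, S ⊆ Icc 1 n → T ⊆ Icc 1 n → S.Nonempty → T.Nonempty → S ≠ T →
    (∑ i ∈ S, f i) / #S ≠ (∑ i ∈ T, f i) / #T

lemma GenericMeans.chordSlope_ne {n : ℕ} {f : ℕ → ℝ} (hf : GenericMeans n f) {a b c d : ℕ}
    (hab : a < b) (hbn : b ≤ n) (hcd : c < d) (hdn : d ≤ n) (hne : a ≠ c ∨ b ≠ d) :
    chordSlope f a b ≠ chordSlope f c d := by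
  rw [chordSlope_eq_sum_div_card hab, chordSlope_eq_sum_div_card hcd]
  refine hf _ _ ?_ ?_ (nonempty_Icc.2 hab) (nonempty_Icc.2 hcd) ?_
  · exact Icc_subset_Icc (by omega) hbn
  · exact Icc_subset_Icc (by omega) hdn
  · intro h
    rw [← coe_inj, coe_Icc, coe_Icc, Set.Icc_eq_Icc_iff (by omega)] at h
    omega

lemma GenericMeans.comp_perm {n : ℕ} {f : ℕ → ℝ} (hf : GenericMeans n f) (σ : Equiv.Perm ℕ)
    (hσ : ∀ i ∉ Icc 1 n, σ i = i) : GenericMeans n (f ∘ σ) := by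
  have hmaps : ∀ S ⊆ Icc 1 n, S.map σ.toEmbedding ⊆ Icc 1 n := by
    intro S hS x hx
    obtain ⟨y, hy, rfl⟩ := mem_map.1 hx
    by_contra h
    rw [Equiv.coe_toEmbedding, σ.injective (hσ _ h)] at h
    exact h (hS hy)
  intro S T hS hT hSne hTne hST
  have := hf (S.map σ.toEmbedding) (T.map σ.toEmbedding) (hmaps S hS) (hmaps T hT)
    (hSne.map) (hTne.map) (fun h => hST (map_injective _ h))
  simpa only [sum_map, card_map, Equiv.coe_toEmbedding, Function.comp_apply] using this

section Contact

variable {n : ℕ} {f : ℕ → ℝ}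

def contactSet (n : ℕ) (f : ℕ → ℝ) : Set ℕ :=
  {j | j ≤ n ∧ ∀ a b : ℕ, a ≤ j → j ≤ b → b ≤ n → a < b →
    ((b : ℝ) - j) * partialSum f a + ((j : ℝ) - a) * partialSum f b
      ≤ ((b : ℝ) - a) * partialSum f j}

lemma mem_contactSet_iff {j : ℕ} :
    j ∈ contactSet n f ↔
      j ≤ n ∧ ∀ a b, a < j → j < b → b ≤ n → chordSlope f j b ≤ chordSlope f a j := by
  have chord_iff : ∀ a b, a < j → j < b →
      (((b : ℝ) - j) * partialSum f a + ((j : ℝ) - a) * partialSum f b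
        ≤ ((b : ℝ) - a) * partialSum f j ↔ chordSlope f j b ≤ chordSlope f a j) := by
    intro a b haj hjb
    have haj' : (0 : ℝ) < (j : ℝ) - a := sub_pos.2 (by exact_mod_cast haj)
    have hjb' : (0 : ℝ) < (b : ℝ) - j := sub_pos.2 (by exact_mod_cast hjb)
    rw [chordSlope, chordSlope, div_le_div_iff₀ hjb' haj']
    constructor <;> intro <;> nlinarith
  refine and_congr_right fun _ => ⟨fun h a b haj hjb hbn => ?_, fun h a b haj hjb hbn hab => ?_⟩
  · exact (chord_iff a b haj hjb).1 (h a b haj.le hjb.le hbn (haj.trans hjb))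
  · rcases haj.eq_or_lt with rfl | haj
    · simp
    rcases hjb.eq_or_lt with rfl | hjb
    · simp
    exact (chord_iff a b haj hjb).2 (h a b haj hjb hbn)

end Contact

section Blocks

variable {L : List ℕ} {f : ℕ → ℝ} {i j : ℕ}

def blockStart (L : List ℕ) (i : ℕ) : ℕ := (L.take i).sum

def boundaries (L : List ℕ) : Set ℕ := {m | ∃ i ≤ L.length, m = blockStart L i}

noncomputable def blockMean (L : List ℕ) (f : ℕ → ℝ) (i : ℕ) : ℝ :=
  (∑ l ∈ Icc (blockStart L i + 1) (blockStart L (i + 1)), f l) / L.getD i 0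

def SlopesDecreasing (L : List ℕ) (f : ℕ → ℝ) : Prop :=
  ∀ i, i + 1 < L.length → blockMean L f (i + 1) < blockMean L f i

def BelowChord (f : ℕ → ℝ) (a b : ℕ) : Prop :=
  ∀ j, a < j → j < b → chordSlope f a j < chordSlope f a b

@[simp] lemma blockStart_zero : blockStart L 0 = 0 := rfl

lemma blockStart_of_length_le (h : L.length ≤ i) : blockStart L i = L.sum := by
  rw [blockStart, List.take_of_length_le h]

lemma blockStart_succ (L : List ℕ) (i : ℕ) :
    blockStart L (i + 1) = blockStart L i + L.getD i 0 := by
  rcases lt_or_ge i L.length with h | h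
  · rw [blockStart, blockStart, List.sum_take_succ L i h, List.getD_eq_getElem L 0 h]
  · rw [blockStart_of_length_le h, blockStart_of_length_le (by omega),
      List.getD_eq_default L 0 h, add_zero]

lemma blockStart_mono : Monotone (blockStart L) :=
  monotone_nat_of_le_succ fun i => by rw [blockStart_succ]; omega

lemma blockStart_le_sum (L : List ℕ) (i : ℕ) : blockStart L i ≤ L.sum :=
  (blockStart_mono (le_max_left i L.length)).trans_eq (blockStart_of_length_le (le_max_right _ _))

lemma blockStart_lt_blockStart (hL : ∀ x ∈ L, 0 < x) (hij : i < j) (hj : j ≤ L.length) :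
    blockStart L i < blockStart L j := by
  have hpos : 0 < L.getD i 0 := by
    rw [List.getD_eq_getElem L 0 (by omega)]
    exact hL _ (List.getElem_mem _)
  have := blockStart_mono (L := L) (Nat.succ_le_of_lt hij)
  rw [blockStart_succ] at this
  omega

lemma blockMean_eq_chordSlope (L : List ℕ) (f : ℕ → ℝ) (i : ℕ) :
    blockMean L f i = chordSlope f (blockStart L i) (blockStart L (i + 1)) := by
  rw [blockMean, chordSlope, partialSum_sub_partialSum (blockStart_mono (Nat.le_succ i)),
    blockStart_succ]
  push_cast
  ring_nf

end Blocks

section Characterization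

variable {n : ℕ} {L : List ℕ} {f : ℕ → ℝ}

lemma chordSlope_block_le_chordSlope_of_mem_block {i a : ℕ}
    (hV : BelowChord f (blockStart L i) (blockStart L (i + 1)))
    (ha : blockStart L i ≤ a) (ha' : a < blockStart L (i + 1)) :
    chordSlope f (blockStart L i) (blockStart L (i + 1))
      ≤ chordSlope f a (blockStart L (i + 1)) := by
  rcases ha.eq_or_lt with rfl | ha
  · exact le_rfl
  exact ((chordSlope_whole_lt_right_iff ha ha').2
    ((chordSlope_left_lt_whole_iff ha ha').1 (hV a ha ha'))).le

lemma chordSlope_block_le_chordSlope_of_lt_blockEnd (hL : ∀ x ∈ L, 0 < x)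
    (hB : SlopesDecreasing L f)
    (hV : ∀ i < L.length, BelowChord f (blockStart L i) (blockStart L (i + 1))) {i a : ℕ}
    (hi : i < L.length) (ha : a < blockStart L (i + 1)) :
    chordSlope f (blockStart L i) (blockStart L (i + 1))
      ≤ chordSlope f a (blockStart L (i + 1)) := by
  induction i generalizing a with
  | zero => exact chordSlope_block_le_chordSlope_of_mem_block (hV 0 hi) (Nat.zero_le a) ha
  | succ i ih =>
    rcases le_or_gt (blockStart L (i + 1)) a with hia | hai
    · exact chordSlope_block_le_chordSlope_of_mem_block (hV _ hi) hia ha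
    have hstep := hB i hi
    rw [blockMean_eq_chordSlope, blockMean_eq_chordSlope] at hstep
    have hprev := ih (by omega) hai
    exact ((chordSlope_right_lt_whole_iff hai (blockStart_lt_blockStart hL (by omega) hi)).2
      (hstep.trans_le hprev)).le

lemma chordSlope_blockStart_le_chordSlope_block (hL : ∀ x ∈ L, 0 < x) (hLn : L.sum = n)
    (hB : SlopesDecreasing L f)
    (hV : ∀ i < L.length, BelowChord f (blockStart L i) (blockStart L (i + 1))) {i b : ℕ}
    (hi : i < L.length) (hb : blockStart L i < b) (hbn : b ≤ n) :
    chordSlope f (blockStart L i) b ≤ chordSlope f (blockStart L i) (blockStart L (i + 1)) := by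
  induction hd : L.length - i generalizing i with
  | zero => omega
  | succ d ih =>
    rcases lt_trichotomy b (blockStart L (i + 1)) with hbi | rfl | hib
    · exact (hV i hi b hb hbi).le
    · exact le_rfl
    have hi' : i + 1 < L.length := by
      by_contra! h
      have := blockStart_of_length_le h
      omega
    have hstep := hB i hi'
    rw [blockMean_eq_chordSlope, blockMean_eq_chordSlope] at hstep
    have hnext := ih hi' hib (by omega)
    exact ((chordSlope_whole_lt_left_iff (blockStart_lt_blockStart hL (by omega) hi) hib).2
      (hnext.trans_lt hstep)).le

lemma blockStart_mem_contactSet (hL : ∀ x ∈ L, 0 < x) (hLn : L.sum = n)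
    (hB : SlopesDecreasing L f)
    (hV : ∀ i < L.length, BelowChord f (blockStart L i) (blockStart L (i + 1))) {i : ℕ}
    (hi : i ≤ L.length) : blockStart L i ∈ contactSet n f := by
  refine mem_contactSet_iff.2 ⟨hLn ▸ blockStart_le_sum L i, fun a b ha hb hbn => ?_⟩
  obtain ⟨i, rfl⟩ : ∃ i', i = i' + 1 :=
    Nat.exists_eq_add_one.2 (Nat.pos_of_ne_zero fun h => by simp [h] at ha)
  have hi' : i + 1 < L.length := by
    refine lt_of_le_of_ne hi fun h => ?_
    rw [h, blockStart_of_length_le le_rfl] at hb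
    omega
  have hstep := hB i hi'
  rw [blockMean_eq_chordSlope, blockMean_eq_chordSlope] at hstep
  calc chordSlope f (blockStart L (i + 1)) b
      ≤ chordSlope f (blockStart L (i + 1)) (blockStart L (i + 1 + 1)) :=
        chordSlope_blockStart_le_chordSlope_block hL hLn hB hV hi' hb hbn
    _ ≤ chordSlope f (blockStart L i) (blockStart L (i + 1)) := hstep.le
    _ ≤ chordSlope f a (blockStart L (i + 1)) :=
        chordSlope_block_le_chordSlope_of_lt_blockEnd hL hB hV (by omega) ha

lemma notMem_contactSet_of_mem_block (hLn : L.sum = n) {i j : ℕ}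
    (hV : BelowChord f (blockStart L i) (blockStart L (i + 1)))
    (hj : blockStart L i < j) (hj' : j < blockStart L (i + 1)) :
    j ∉ contactSet n f := by
  intro hjC
  have hcontact := (mem_contactSet_iff.1 hjC).2 _ _ hj hj' (hLn ▸ blockStart_le_sum L (i + 1))
  exact hcontact.not_gt ((chordSlope_left_lt_whole_iff hj hj').1 (hV j hj hj'))

lemma exists_mem_block_of_notMem_boundaries (hLn : L.sum = n) {j : ℕ} (hjn : j ≤ n)
    (hj : j ∉ boundaries L) :
    ∃ i < L.length, blockStart L i < j ∧ j < blockStart L (i + 1) := by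
  have hex : ∃ i, j ≤ blockStart L i := ⟨L.length, by rw [blockStart_of_length_le le_rfl]; omega⟩
  set i := Nat.find hex
  have hle : j ≤ blockStart L i := Nat.find_spec hex
  have hk : i ≤ L.length := Nat.find_min' hex (by rw [blockStart_of_length_le le_rfl]; omega)
  have hne : j ≠ blockStart L i := fun h => hj ⟨i, hk, h⟩
  have hi0 : i ≠ 0 := fun h => by rw [h, blockStart_zero] at hle hne; omega
  refine ⟨i - 1, by omega, not_le.1 (Nat.find_min hex (by omega : i - 1 < i)), ?_⟩
  rw [Nat.sub_add_cancel (Nat.one_le_iff_ne_zero.2 hi0)]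
  omega

lemma contactSet_eq_boundaries (hL : ∀ x ∈ L, 0 < x) (hLn : L.sum = n)
    (hB : SlopesDecreasing L f)
    (hV : ∀ i < L.length, BelowChord f (blockStart L i) (blockStart L (i + 1))) :
    contactSet n f = boundaries L := by
  ext j
  constructor
  · intro hj
    by_contra hjT
    obtain ⟨i, hi, hij, hji⟩ := exists_mem_block_of_notMem_boundaries hLn hj.1 hjT
    exact notMem_contactSet_of_mem_block hLn (hV i hi) hij hji hj
  · rintro ⟨i, hi, rfl⟩
    exact blockStart_mem_contactSet hL hLn hB hV hi

lemma mem_contactSet_of_forall_chordSlope_le {c v : ℕ} (hc : c ∈ contactSet n f) (hcv : c < v)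
    (hvn : v ≤ n) (hmax : ∀ w ∈ Ioc c n, chordSlope f c w ≤ chordSlope f c v) :
    v ∈ contactSet n f := by
  refine mem_contactSet_iff.2 ⟨hvn, fun a b hav hvb hbn => ?_⟩
  have hright : chordSlope f v b ≤ chordSlope f c v := not_lt.1 fun h =>
    (hmax b (mem_Ioc.2 ⟨hcv.trans hvb, hbn⟩)).not_gt ((chordSlope_left_lt_whole_iff hcv hvb).2 h)
  refine hright.trans ?_
  rcases lt_trichotomy a c with hac | rfl | hca
  · have hcC := (mem_contactSet_iff.1 hc).2 a v hac hcv hvn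
    exact not_lt.1 fun h => hcC.not_gt ((chordSlope_whole_lt_right_iff hac hcv).1 h)
  · exact le_rfl
  · exact not_lt.1 fun h => (hmax a (mem_Ioc.2 ⟨hca, by omega⟩)).not_gt
      ((chordSlope_whole_lt_left_iff hca hav).2 ((chordSlope_right_lt_whole_iff hca hav).1 h))

lemma notMem_contactSet_of_forall_chordSlope_le (hf : GenericMeans n f) {c j v : ℕ}
    (hcj : c < j) (hjv : j < v) (hvn : v ≤ n)
    (hmax : ∀ w ∈ Ioc c n, chordSlope f c w ≤ chordSlope f c v) : j ∉ contactSet n f := by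
  intro hjC
  have hlt : chordSlope f c j < chordSlope f c v :=
    (hmax j (mem_Ioc.2 ⟨hcj, by omega⟩)).lt_of_ne
      (hf.chordSlope_ne hcj (by omega) (hcj.trans hjv) hvn (Or.inr hjv.ne))
  exact ((mem_contactSet_iff.1 hjC).2 c v hcj hjv hvn).not_gt
    ((chordSlope_left_lt_whole_iff hcj hjv).1 hlt)

lemma slopesDecreasing_of_boundaries_subset (hL : ∀ x ∈ L, 0 < x) (hLn : L.sum = n)
    (hf : GenericMeans n f) (hC : boundaries L ⊆ contactSet n f) : SlopesDecreasing L f := by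
  intro i hi
  have h01 := blockStart_lt_blockStart hL (lt_add_one i) (by omega)
  have h12 := blockStart_lt_blockStart hL (lt_add_one (i + 1)) hi
  have hn1 := hLn ▸ blockStart_le_sum L (i + 1)
  have hn2 := hLn ▸ blockStart_le_sum L (i + 1 + 1)
  rw [blockMean_eq_chordSlope, blockMean_eq_chordSlope]
  exact ((mem_contactSet_iff.1 (hC ⟨i + 1, hi.le, rfl⟩)).2 _ _ h01 h12 hn2).lt_of_ne
    (hf.chordSlope_ne h12 hn2 h01 hn1 (Or.inl h01.ne'))

lemma belowChord_of_contactSet_eq (hL : ∀ x ∈ L, 0 < x) (hLn : L.sum = n)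
    (hf : GenericMeans n f) (hC : contactSet n f = boundaries L) {i : ℕ} (hi : i < L.length) :
    BelowChord f (blockStart L i) (blockStart L (i + 1)) := by
  have hcd := blockStart_lt_blockStart hL (lt_add_one i) hi
  have hdn := hLn ▸ blockStart_le_sum L (i + 1)
  obtain ⟨v, hv, hmax⟩ := exists_max_image (Ioc (blockStart L i) n) (chordSlope f (blockStart L i))
    ⟨_, mem_Ioc.2 ⟨hcd, hdn⟩⟩
  rw [mem_Ioc] at hv
  have hvC : v ∈ contactSet n f :=
    mem_contactSet_of_forall_chordSlope_le (hC ▸ ⟨i, hi.le, rfl⟩) hv.1 hv.2 hmax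
  have hvd : v = blockStart L (i + 1) := by
    obtain ⟨k, -, rfl⟩ := hC ▸ hvC
    have hik : i < k := lt_of_not_ge fun h => (blockStart_mono h).not_gt hv.1
    refine ((blockStart_mono hik).eq_or_lt.resolve_right fun h => ?_).symm
    exact notMem_contactSet_of_forall_chordSlope_le hf hcd h hv.2 hmax
      (hC ▸ ⟨i + 1, hi, rfl⟩)
  subst hvd
  intro j hcj hjd
  exact (hmax j (mem_Ioc.2 ⟨hcj, by omega⟩)).lt_of_ne
    (hf.chordSlope_ne hcj (by omega) hcd hdn (Or.inr hjd.ne))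

theorem contactSet_eq_boundaries_iff (hL : ∀ x ∈ L, 0 < x) (hLn : L.sum = n)
    (hf : GenericMeans n f) :
    contactSet n f = boundaries L ↔
      SlopesDecreasing L f ∧ ∀ i < L.length, BelowChord f (blockStart L i) (blockStart L (i + 1)) :=
  ⟨fun hC => ⟨slopesDecreasing_of_boundaries_subset hL hLn hf hC.ge,
      fun _ hi => belowChord_of_contactSet_eq hL hLn hf hC hi⟩,
    fun ⟨hB, hV⟩ => contactSet_eq_boundaries hL hLn hB hV⟩

end Characterization

def blockRotation (c m s : ℕ) : Equiv.Perm ℕ := (List.range' (c + 1) m).formPerm ^ s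

lemma blockRotation_apply_of_mem {c m s p : ℕ} (hp : p ∈ Icc (c + 1) (c + m)) :
    blockRotation c m s p = c + 1 + (p - (c + 1) + s) % m := by
  rw [mem_Icc] at hp
  have hlen : p - (c + 1) < (List.range' (c + 1) m).length := by
    rw [List.length_range']; omega
  have hget := List.formPerm_pow_apply_getElem _ List.nodup_range' s _ hlen
  simp only [List.getElem_range', List.length_range', one_mul] at hget
  rwa [Nat.add_sub_cancel' hp.1] at hget

lemma blockRotation_apply_of_notMem {c m s p : ℕ} (hp : p ∉ Icc (c + 1) (c + m)) :
    blockRotation c m s p = p := by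
  refine Equiv.Perm.pow_apply_eq_self_of_apply_eq_self (List.formPerm_apply_of_notMem ?_) s
  rw [List.mem_range'_1]
  rw [mem_Icc] at hp
  omega

section Rotation

variable {f : ℕ → ℝ} {c m : ℕ}

noncomputable def cyclicSum (f : ℕ → ℝ) (c m r : ℕ) : ℝ := ∑ t ∈ range r, f (c + 1 + t % m)

lemma cyclicSum_eq {r : ℕ} (hr : r ≤ m) :
    cyclicSum f c m r = partialSum f (c + r) - partialSum f c := by
  rw [partialSum_sub_partialSum (Nat.le_add_right c r), sum_Icc_eq_sum_range, cyclicSum]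
  exact sum_congr rfl fun t ht => by rw [Nat.mod_eq_of_lt ((mem_range.1 ht).trans_le hr)]

lemma cyclicSum_add_period (r : ℕ) :
    cyclicSum f c m (r + m) = cyclicSum f c m r + cyclicSum f c m m := by
  rw [cyclicSum, add_comm r m, sum_range_add, add_comm]
  simp only [Nat.add_mod_left, cyclicSum]

lemma sum_Icc_comp_blockRotation (s : ℕ) {q : ℕ} (hq : q ≤ m) :
    ∑ l ∈ Icc (c + 1) (c + q), f (blockRotation c m s l)
      = cyclicSum f c m (s + q) - cyclicSum f c m s := by
  rw [sum_Icc_eq_sum_range, cyclicSum, cyclicSum, sum_range_add, add_sub_cancel_left]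
  refine sum_congr rfl fun t ht => ?_
  rw [blockRotation_apply_of_mem (mem_Icc.2 ⟨by omega, by have := mem_range.1 ht; omega⟩),
    Nat.add_sub_cancel_left, add_comm t s]

lemma chordSlope_comp_blockRotation (s : ℕ) {q : ℕ} (hq : q ≤ m) :
    chordSlope (f ∘ blockRotation c m s) c (c + q)
      = (cyclicSum f c m (s + q) - cyclicSum f c m s) / q := by
  rw [chordSlope, partialSum_sub_partialSum (Nat.le_add_right c q)]
  simp only [Function.comp_apply]
  rw [sum_Icc_comp_blockRotation s hq]
  push_cast
  ring_nf

/- Removing the drift makes the cyclic sums `m`-periodic; the block rotated by `s` lies below its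
chord iff `s` is the strict maximum of this periodic sequence (the cycle lemma). -/
noncomputable def tiltedCyclicSum (f : ℕ → ℝ) (c m r : ℕ) : ℝ :=
  cyclicSum f c m r - r * (cyclicSum f c m m / m)

lemma tiltedCyclicSum_periodic (hm : 0 < m) : Function.Periodic (tiltedCyclicSum f c m) m := by
  intro r
  have hm' : (m : ℝ) ≠ 0 := by positivity
  simp only [tiltedCyclicSum, cyclicSum_add_period]
  push_cast
  field_simp
  ring

lemma GenericMeans.injOn_tiltedCyclicSum {n : ℕ} (hf : GenericMeans n f) (hcm : c + m ≤ n) :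
    Set.InjOn (tiltedCyclicSum f c m) (Set.Iio m) := by
  have key : ∀ u v, u < v → v < m → tiltedCyclicSum f c m u ≠ tiltedCyclicSum f c m v := by
    intro u v huv hvm heq
    have hslope : chordSlope f (c + u) (c + v) = chordSlope f c (c + m) := by
      have huv' : (0 : ℝ) < (v : ℝ) - u := sub_pos.2 (by exact_mod_cast huv)
      have hm' : (0 : ℝ) < m := by exact_mod_cast (huv.trans hvm).trans_le' (Nat.zero_le u)
      rw [chordSlope, chordSlope, ← cyclicSum_eq le_rfl, show partialSum f (c + v) -
        partialSum f (c + u) = cyclicSum f c m v - cyclicSum f c m u by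
          rw [cyclicSum_eq hvm.le, cyclicSum_eq (huv.trans hvm).le]; ring]
      simp only [tiltedCyclicSum] at heq
      push_cast
      rw [div_eq_div_iff (by linarith) (by linarith)]
      field_simp at heq ⊢
      linarith
    exact hf.chordSlope_ne (by omega) (by omega) (by omega) hcm (Or.inr (by omega)) hslope
  intro u hu v hv huv
  rcases lt_trichotomy u v with h | h | h
  · exact absurd huv (key u v h hv)
  · exact h
  · exact absurd huv.symm (key v u h hu)

lemma belowChord_comp_blockRotation_iff (hm : 0 < m) (s : ℕ) :
    BelowChord (f ∘ blockRotation c m s) c (c + m) ↔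
      ∀ q, 0 < q → q < m → tiltedCyclicSum f c m (s + q) < tiltedCyclicSum f c m s := by
  have hm' : (0 : ℝ) < m := by exact_mod_cast hm
  have hq_iff : ∀ q, 0 < q → q ≤ m →
      (chordSlope (f ∘ blockRotation c m s) c (c + q)
          < chordSlope (f ∘ blockRotation c m s) c (c + m) ↔
        tiltedCyclicSum f c m (s + q) < tiltedCyclicSum f c m s) := by
    intro q hq hqm
    have hq' : (0 : ℝ) < q := by exact_mod_cast hq
    have hdiff : tiltedCyclicSum f c m s - tiltedCyclicSum f c m (s + q)
        = (cyclicSum f c m m * q - (cyclicSum f c m (s + q) - cyclicSum f c m s) * m) / m := by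
      simp only [tiltedCyclicSum]
      push_cast
      field_simp
      ring
    rw [chordSlope_comp_blockRotation s hqm, chordSlope_comp_blockRotation s le_rfl,
      cyclicSum_add_period, add_sub_cancel_left, div_lt_div_iff₀ hq' hm',
      ← sub_pos (a := tiltedCyclicSum f c m s),
      hdiff, div_pos_iff_of_pos_right hm', sub_pos]
  constructor
  · intro h q hq hqm
    exact (hq_iff q hq hqm.le).1 (h (c + q) (by omega) (by omega))
  · intro h j hcj hjm
    obtain ⟨q, rfl⟩ := Nat.exists_eq_add_of_le hcj.le
    exact (hq_iff q (by omega) (by omega)).2 (h q (by omega) (by omega))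

lemma existsUnique_belowChord_comp_blockRotation {n : ℕ} (hf : GenericMeans n f) (hm : 0 < m)
    (hcm : c + m ≤ n) : ∃! s, s < m ∧ BelowChord (f ∘ blockRotation c m s) c (c + m) := by
  obtain ⟨s, ⟨hs, hmax⟩, huniq⟩ := existsUnique_forall_lt_of_periodic hm
    (tiltedCyclicSum_periodic (f := f) (c := c) hm) (hf.injOn_tiltedCyclicSum hcm)
  refine ⟨s, ⟨hs, (belowChord_comp_blockRotation_iff hm s).2 hmax⟩, fun t ⟨ht, htC⟩ => ?_⟩
  exact huniq t ⟨ht, (belowChord_comp_blockRotation_iff hm t).1 htC⟩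

end Rotation

section Invariance

variable {L : List ℕ} {f : ℕ → ℝ} {i : ℕ} {σ : Equiv.Perm ℕ}

lemma disjoint_Icc_blockStart {i j : ℕ} (hij : i ≠ j) :
    Disjoint (Icc (blockStart L i + 1) (blockStart L (i + 1)))
      (Icc (blockStart L j + 1) (blockStart L (j + 1))) := by
  rw [disjoint_left]
  intro p hpi hpj
  rw [mem_Icc] at hpi hpj
  rcases lt_or_gt_of_ne hij with h | h
  · have := blockStart_mono (L := L) (show i + 1 ≤ j by omega); omega
  · have := blockStart_mono (L := L) (show j + 1 ≤ i by omega); omega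

lemma blockMean_comp_perm (hσ : ∀ p ∉ Icc (blockStart L i + 1) (blockStart L (i + 1)), σ p = p)
    (j : ℕ) : blockMean L (f ∘ σ) j = blockMean L f j := by
  rw [blockMean, blockMean]
  congr 1
  rcases eq_or_ne j i with rfl | hji
  · exact Equiv.Perm.sum_comp σ _ f fun p hp => not_not.1 fun h => hp (hσ p h)
  · exact sum_congr rfl fun p hp => by
      rw [Function.comp_apply, hσ p (disjoint_left.1 (disjoint_Icc_blockStart hji) hp)]

lemma belowChord_comp_perm_iff
    (hσ : ∀ p ∉ Icc (blockStart L i + 1) (blockStart L (i + 1)), σ p = p) {j : ℕ} (hji : j ≠ i) :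
    BelowChord (f ∘ σ) (blockStart L j) (blockStart L (j + 1))
      ↔ BelowChord f (blockStart L j) (blockStart L (j + 1)) := by
  have hslope : ∀ b ≤ blockStart L (j + 1), blockStart L j ≤ b →
      chordSlope (f ∘ σ) (blockStart L j) b = chordSlope f (blockStart L j) b :=
    fun b hb hjb => chordSlope_congr hjb fun p hp => by
      rw [Function.comp_apply, hσ p (disjoint_left.1 (disjoint_Icc_blockStart hji)
        (Icc_subset_Icc le_rfl hb hp))]
  refine forall₂_congr fun k hjk => imp_congr_right fun hk => ?_
  rw [hslope k hk.le hjk.le, hslope _ le_rfl (blockStart_mono (Nat.le_succ j))]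

lemma slopesDecreasing_comp_perm_iff
    (hσ : ∀ p ∉ Icc (blockStart L i + 1) (blockStart L (i + 1)), σ p = p) :
    SlopesDecreasing L (f ∘ σ) ↔ SlopesDecreasing L f := by
  simp only [SlopesDecreasing, blockMean_comp_perm hσ]

lemma genericMeans_comp_perm_iff {n : ℕ} (hσ : ∀ p ∉ Icc 1 n, σ p = p) :
    GenericMeans n (f ∘ σ) ↔ GenericMeans n f := by
  refine ⟨fun h => ?_, fun h => h.comp_perm σ hσ⟩
  have hσ' : ∀ p ∉ Icc 1 n, σ.symm p = p := fun p hp => σ.symm_apply_eq.2 (hσ p hp).symm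
  simpa [Function.comp_assoc] using h.comp_perm σ.symm hσ'

end Invariance

section Events

/- `goodEvent n L 0` is the slope event of the theorem and, up to the null set of non-generic
paths, `goodEvent n L L.length` is the event that the faces have lengths `L`. -/
def goodEvent (n : ℕ) (L : List ℕ) (i : ℕ) : Set (ℕ → ℝ) :=
  {f | GenericMeans n f ∧ SlopesDecreasing L f ∧
    ∀ j < i, BelowChord f (blockStart L j) (blockStart L (j + 1))}

lemma measurableSet_goodEvent (n : ℕ) (L : List ℕ) (i : ℕ) : MeasurableSet (goodEvent n L i) := by
  simp only [goodEvent, GenericMeans, SlopesDecreasing, blockMean, BelowChord, chordSlope,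
    partialSum]
  measurability

variable {n : ℕ} {L : List ℕ} {i : ℕ}

lemma comp_blockRotation_mem_goodEvent_iff (hLn : L.sum = n) (s : ℕ) (f : ℕ → ℝ) :
    f ∘ blockRotation (blockStart L i) (L.getD i 0) s ∈ goodEvent n L (i + 1) ↔
      f ∈ goodEvent n L i ∧
        BelowChord (f ∘ blockRotation (blockStart L i) (L.getD i 0) s)
          (blockStart L i) (blockStart L (i + 1)) := by
  have hσ : ∀ p ∉ Icc (blockStart L i + 1) (blockStart L (i + 1)),
      blockRotation (blockStart L i) (L.getD i 0) s p = p := fun p hp =>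
    blockRotation_apply_of_notMem (by rwa [← blockStart_succ])
  have hσn : ∀ p ∉ Icc 1 n, blockRotation (blockStart L i) (L.getD i 0) s p = p :=
    fun p hp => hσ p fun h =>
      hp (Icc_subset_Icc (by omega) (hLn ▸ blockStart_le_sum L (i + 1)) h)
  have hprev : (∀ j < i, BelowChord (f ∘ blockRotation (blockStart L i) (L.getD i 0) s)
      (blockStart L j) (blockStart L (j + 1))) ↔
        ∀ j < i, BelowChord f (blockStart L j) (blockStart L (j + 1)) :=
    forall₂_congr fun j hj => belowChord_comp_perm_iff hσ hj.ne
  simp only [goodEvent, Set.mem_ofPred_eq, genericMeans_comp_perm_iff hσn,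
    slopesDecreasing_comp_perm_iff hσ, Nat.forall_lt_succ_right, hprev, and_assoc]

end Events

section Exchangeable

def IsExchangeable (n : ℕ) (ν : Measure (ℕ → ℝ)) : Prop :=
  ∀ σ : Equiv.Perm ℕ, (∀ p ∉ Icc 1 n, σ p = p) → MeasurePreserving (fun f => f ∘ σ) ν ν

variable {n : ℕ} {L : List ℕ} {ν : Measure (ℕ → ℝ)}

lemma measure_goodEvent_eq_mul_succ
    (hν : IsExchangeable n ν)
    (hL : ∀ x ∈ L, 0 < x) (hLn : L.sum = n) {i : ℕ} (hi : i < L.length) :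
    ν (goodEvent n L i) = L.getD i 0 * ν (goodEvent n L (i + 1)) := by
  set ρ := blockRotation (blockStart L i) (L.getD i 0)
  have hm : 0 < L.getD i 0 := by
    rw [List.getD_eq_getElem L 0 hi]; exact hL _ (List.getElem_mem hi)
  have hcm : blockStart L i + L.getD i 0 ≤ n := blockStart_succ L i ▸ hLn ▸ blockStart_le_sum L _
  have hunique : ∀ f ∈ goodEvent n L i,
      ∃! s, s < L.getD i 0 ∧ BelowChord (f ∘ ρ s) (blockStart L i) (blockStart L (i + 1)) :=
    fun f hf => blockStart_succ L i ▸ existsUnique_belowChord_comp_blockRotation hf.1 hm hcm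
  rw [← card_range (L.getD i 0)]
  refine measure_eq_card_mul_of_eq_biUnion_preimage (range (L.getD i 0)) (fun s f => f ∘ ρ s)
    (fun s _ => hν (ρ s) fun p hp => blockRotation_apply_of_notMem fun h => hp
      (Icc_subset_Icc (by omega) hcm h))
    (measurableSet_goodEvent n L (i + 1)) ?_ ?_
  · intro s hs t ht hst
    refine Set.disjoint_left.2 fun f hfs hft => hst ?_
    obtain ⟨hf, hfs⟩ := (comp_blockRotation_mem_goodEvent_iff hLn s f).1 hfs
    obtain ⟨-, hft⟩ := (comp_blockRotation_mem_goodEvent_iff hLn t f).1 hft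
    exact (hunique f hf).unique ⟨mem_range.1 hs, hfs⟩ ⟨mem_range.1 ht, hft⟩
  · ext f
    simp only [Set.mem_iUnion, Set.mem_preimage, mem_range, exists_prop]
    refine ⟨fun hf => ?_, fun ⟨s, _, hfs⟩ =>
      ((comp_blockRotation_mem_goodEvent_iff hLn s f).1 hfs).1⟩
    obtain ⟨s, ⟨hs, hfs⟩, -⟩ := hunique f hf
    exact ⟨s, hs, (comp_blockRotation_mem_goodEvent_iff hLn s f).2 ⟨hf, hfs⟩⟩

lemma measure_goodEvent_zero_eq_prod_mul
    (hν : IsExchangeable n ν)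
    (hL : ∀ x ∈ L, 0 < x) (hLn : L.sum = n) :
    ν (goodEvent n L 0) = L.prod * ν (goodEvent n L L.length) := by
  have key : ∀ i ≤ L.length, ν (goodEvent n L 0) = (L.take i).prod * ν (goodEvent n L i) := by
    intro i hi
    induction i with
    | zero => simp
    | succ i ih =>
      rw [ih (by omega), measure_goodEvent_eq_mul_succ hν hL hLn hi, List.prod_take_succ L i hi,
        List.getD_eq_getElem L 0 hi, Nat.cast_mul, mul_assoc]
  rw [key L.length le_rfl, List.take_length]

end Exchangeable

-- As in the theorem, `L` is coerced to `List ℝ` here through the list monad.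
lemma ofReal_prod_map_one_div {L : List ℕ} (hL : ∀ x ∈ L, 0 < x) :
    ENNReal.ofReal ((L.map (fun m => (1 : ℝ) / m)).prod) = (L.prod : ENNReal)⁻¹ := by
  have hpos : (0 : ℝ) < L.prod := by exact_mod_cast List.prod_pos hL
  simp only [bind_pure_comp, List.map_eq_map, one_div]
  rw [← List.prod_inv, ← Nat.cast_list_prod, ENNReal.ofReal_inv_of_pos hpos,
    ENNReal.ofReal_natCast]

end ConcaveMajorant

open ConcaveMajorant in
theorem stmt_5_general {Ω : Type*} [MeasurableSpace Ω] (μ : Measure Ω)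
    (n : ℕ) (X : ℕ → Ω → ℝ) (hmeas : ∀ i, Measurable (X i))
    (hexch : ∀ σ : Equiv.Perm ℕ, (∀ i, i ∉ Finset.Icc 1 n → σ i = i) →
      Measure.map (fun ω (i : ℕ) => X (σ i) ω) μ = Measure.map (fun ω (i : ℕ) => X i ω) μ)
    (hA : μ {ω | ∃ S T : Finset ℕ, S ⊆ Finset.Icc 1 n ∧ T ⊆ Finset.Icc 1 n ∧
        S.Nonempty ∧ T.Nonempty ∧ S ≠ T ∧
        (∑ i ∈ S, X i ω) / S.card = (∑ i ∈ T, X i ω) / T.card} = 0)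
    (L : List ℕ) (hLpos : ∀ x ∈ L, 0 < x) (hLsum : L.sum = n) :
    μ {ω | {j : ℕ | j ≤ n ∧ ∀ a b : ℕ, a ≤ j → j ≤ b → b ≤ n → a < b →
          ((b : ℝ) - j) * (∑ i ∈ Finset.Icc 1 a, X i ω)
            + ((j : ℝ) - a) * (∑ i ∈ Finset.Icc 1 b, X i ω)
            ≤ ((b : ℝ) - a) * (∑ i ∈ Finset.Icc 1 j, X i ω)}
        = {m : ℕ | ∃ i ≤ L.length, m = (L.take i).sum}}
      = μ {ω | ∀ i : ℕ, i + 1 < L.length →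
            (∑ l ∈ Finset.Icc ((L.take (i + 1)).sum + 1) ((L.take (i + 2)).sum), X l ω)
                / (L.getD (i + 1) 0)
              < (∑ l ∈ Finset.Icc ((L.take i).sum + 1) ((L.take (i + 1)).sum), X l ω)
                / (L.getD i 0)}
        * ENNReal.ofReal ((L.map (fun m => (1 : ℝ) / m)).prod) := by
  set Y : Ω → ℕ → ℝ := fun ω i => X i ω
  have hY : Measurable Y := measurable_pi_lambda _ hmeas
  have hν : IsExchangeable n (μ.map Y) := fun σ hσ => by
    have hσ_meas : Measurable (fun f : ℕ → ℝ => f ∘ σ) :=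
      measurable_pi_lambda _ fun p => measurable_pi_apply (σ p)
    exact ⟨hσ_meas, by rw [Measure.map_map hσ_meas hY]; exact hexch σ hσ⟩
  have hgen : ∀ᵐ ω ∂μ, GenericMeans n (Y ω) := by
    rw [ae_iff]
    convert hA using 3 with ω
    simp [GenericMeans, Y]
  have hcontact : {ω | contactSet n (Y ω) = boundaries L} =ᵐ[μ] Y ⁻¹' goodEvent n L L.length := by
    filter_upwards [hgen] with ω hω
    exact propext ((contactSet_eq_boundaries_iff hLpos hLsum hω).trans
      ⟨fun h => ⟨hω, h⟩, fun h => h.2⟩)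
  have hslopes : {ω | SlopesDecreasing L (Y ω)} =ᵐ[μ] Y ⁻¹' goodEvent n L 0 := by
    filter_upwards [hgen] with ω hω
    exact propext ⟨fun h => ⟨hω, h, by simp⟩, fun h => h.2.1⟩
  have hprod : (L.prod : ENNReal) ≠ 0 := by exact_mod_cast (List.prod_pos hLpos).ne'
  change μ {ω | contactSet n (Y ω) = boundaries L} = μ {ω | SlopesDecreasing L (Y ω)} * _
  rw [measure_congr hcontact, measure_congr hslopes,
    ← Measure.map_apply hY (measurableSet_goodEvent n L _),
    ← Measure.map_apply hY (measurableSet_goodEvent n L _),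
    measure_goodEvent_zero_eq_prod_mul hν hLpos hLsum, ofReal_prod_map_one_div hLpos, mul_comm,
    ← mul_assoc, ENNReal.inv_mul_cancel hprod (ENNReal.natCast_ne_top _), one_mul]

/-- For exchangeable increments `X_1,...,X_n` with a.s. no two distinct nonempty subsets
of equal arithmetic mean: the probability that the composition of `n` induced by the face
lengths of the concave majorant is `(n_1,...,n_k)` (encoded by the list `L`; equivalently,
the set of points where the walk meets its concave majorant equals the set of partial sums
of `L`) equals `P(slopes of the k blocks strictly decreasing) · ∏ 1/n_i`. -/
theorem stmt_5 {Ω : Type*} [MeasurableSpace Ω] (μ : Measure Ω) [IsProbabilityMeasure μ]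
    (n : ℕ) (hn : 0 < n) (X : ℕ → Ω → ℝ) (hmeas : ∀ i, Measurable (X i))
    (hexch : ∀ σ : Equiv.Perm ℕ, (∀ i, i ∉ Finset.Icc 1 n → σ i = i) →
      Measure.map (fun ω (i : ℕ) => X (σ i) ω) μ = Measure.map (fun ω (i : ℕ) => X i ω) μ)
    (hA : μ {ω | ∃ S T : Finset ℕ, S ⊆ Finset.Icc 1 n ∧ T ⊆ Finset.Icc 1 n ∧
        S.Nonempty ∧ T.Nonempty ∧ S ≠ T ∧
        (∑ i ∈ S, X i ω) / S.card = (∑ i ∈ T, X i ω) / T.card} = 0)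
    (L : List ℕ) (hLpos : ∀ x ∈ L, 0 < x) (hLsum : L.sum = n) :
    μ {ω | {j : ℕ | j ≤ n ∧ ∀ a b : ℕ, a ≤ j → j ≤ b → b ≤ n → a < b →
          ((b : ℝ) - j) * (∑ i ∈ Finset.Icc 1 a, X i ω)
            + ((j : ℝ) - a) * (∑ i ∈ Finset.Icc 1 b, X i ω)
            ≤ ((b : ℝ) - a) * (∑ i ∈ Finset.Icc 1 j, X i ω)}
        = {m : ℕ | ∃ i ≤ L.length, m = (L.take i).sum}}
      = μ {ω | ∀ i : ℕ, i + 1 < L.length →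
            (∑ l ∈ Finset.Icc ((L.take (i + 1)).sum + 1) ((L.take (i + 2)).sum), X l ω)
                / (L.getD (i + 1) 0)
              < (∑ l ∈ Finset.Icc ((L.take i).sum + 1) ((L.take (i + 1)).sum), X l ω)
                / (L.getD i 0)}
        * ENNReal.ofReal ((L.map (fun m => (1 : ℝ) / m)).prod) :=
  stmt_5_general μ n X hmeas hexch hA L hLpos hLsum
end
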